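/- arXiv:2501.11024 — 8 statements merged into one kernel-verified Lean document; each statement's English description precedes it below -/
import Mathlib

section
/- (Symmetry property.) Let N(i) denote the set of neighbors of node i. Suppose nodes i and j satisfy N(i) \ {j} = N(j) \ {i}. Let r ∈ {0, ..., n−1} be an order such that either r = 0, or r = n−1, or λ_r ≠ λ_{r+1} (the cut does not split an eigenspace). Then c_i^{LEC(r)} = c_j^{LEC(r)}. -/
open Matrix Finset

/-- Symmetry property: if nodes `i` and `j` have identical
neighborhoods apart from each other (`N(i) \ {j} = N(j) \ {i}`, i.e. `A i k = A j k`
for all `k ∉ {i,j}`), and the order `r` is `0`, or `n−1`, or does not split an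
eigenspace (paper's `λ_r ≠ λ_{r+1}`, i.e. `lam (r-1) ≠ lam r` in 0-based indexing),
then `c_i^{LEC(r)} = c_j^{LEC(r)}`. -/
theorem lec_symmetry
    (n : ℕ) (hn : 0 < n)
    (A : Matrix (Fin n) (Fin n) ℝ)
    (hA01 : ∀ i j, A i j = 0 ∨ A i j = 1)
    (hAsym : ∀ i j, A i j = A j i)
    (hAdiag : ∀ i, A i i = 0)
    (d : Fin n → ℝ) (hd : ∀ i, d i = ∑ j, A i j)
    (L : Matrix (Fin n) (Fin n) ℝ) (hLdef : L = Matrix.diagonal d - A)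
    (q : ℕ → Fin n → ℝ) (lam : ℕ → ℝ)
    (heig : ∀ s, s < n → L *ᵥ q s = lam s • q s)
    (horth : ∀ s, s < n → ∀ t, t < n → ∑ i, q s i * q t i = if s = t then 1 else 0)
    (hdesc : ∀ s t, s ≤ t → t < n → lam t ≤ lam s)
    (hlam0 : lam (n - 1) = 0)
    (hqlast : ∀ i, q (n - 1) i = 1 / Real.sqrt n)
    (lec : ℕ → Fin n → ℝ)
    (hlec : ∀ r i, lec r i = (q (n - 1) i) ^ 2 + ∑ s ∈ Finset.range r, (q s i) ^ 2)
    (i j : Fin n)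
    (hN : ∀ k : Fin n, k ≠ i → k ≠ j → A i k = A j k)
    (r : ℕ) (hr : r < n)
    (hcut : r = 0 ∨ r = n - 1 ∨ lam (r - 1) ≠ lam r) :
    lec r i = lec r j := by
  rcases eq_or_ne i j with rfl | hij
  · rfl
  set σ : Equiv.Perm (Fin n) := Equiv.swap i j with hσdef
  have hσi : σ i = j := Equiv.swap_apply_left i j
  have hσj : σ j = i := Equiv.swap_apply_right i j
  have hσo : ∀ a : Fin n, a ≠ i → a ≠ j → σ a = a := fun a h1 h2 =>
    Equiv.swap_apply_of_ne_of_ne h1 h2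
  -- invariance of A under the swap
  have hAσ : ∀ a b, A (σ a) (σ b) = A a b := by
    intro a b
    rcases eq_or_ne a i with rfl | hai
    · rcases eq_or_ne b a with rfl | hbi
      · rw [hσi, hAdiag, hAdiag]
      · rcases eq_or_ne b j with rfl | hbj
        · rw [hσi, hσj, hAsym]
        · rw [hσi, hσo b hbi hbj, ← hN b hbi hbj]
    · rcases eq_or_ne a j with rfl | haj
      · rcases eq_or_ne b i with rfl | hbi
        · rw [hσj, hσi, hAsym]
        · rcases eq_or_ne b a with rfl | hbj
          · rw [hσj, hAdiag, hAdiag]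
          · rw [hσj, hσo b hbi hbj]
            rw [hAsym, ← hN b hbi hbj, hAsym]
      · rcases eq_or_ne b i with rfl | hbi
        · rw [hσo a hai haj, hσi, hAsym, ← hN a hai haj, hAsym]
        · rcases eq_or_ne b j with rfl | hbj
          · rw [hσo a hai haj, hσj, hAsym, hN a hai haj, hAsym]
          · rw [hσo a hai haj, hσo b hbi hbj]
  -- degrees are swap invariant
  have hdσ : ∀ a, d (σ a) = d a := by
    have hsum : ∑ k, A i k = ∑ k, A j k := by
      calc ∑ k, A i k = ∑ k, A i (σ k) := (Equiv.sum_comp σ (fun k => A i k)).symm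
        _ = ∑ k, A (σ j) (σ k) := by rw [hσj]
        _ = ∑ k, A j k := Finset.sum_congr rfl fun k _ => hAσ j k
    have hdij : d j = d i := by rw [hd, hd, hsum]
    intro a
    rcases eq_or_ne a i with rfl | hai
    · rw [hσi, hdij]
    · rcases eq_or_ne a j with rfl | haj
      · rw [hσj, hdij]
      · rw [hσo a hai haj]
  -- invariance of L under the swap
  have hLσ : ∀ a b, L (σ a) (σ b) = L a b := by
    intro a b
    rw [hLdef]
    simp only [Matrix.sub_apply, Matrix.diagonal_apply, σ.injective.eq_iff]
    rw [hAσ]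
    by_cases h : a = b
    · simp [h, hdσ]
    · simp [h]
  -- symmetry of L
  have hLs : ∀ a b, L a b = L b a := by
    intro a b
    rw [hLdef]
    simp only [Matrix.sub_apply, Matrix.diagonal_apply]
    rw [hAsym]
    by_cases h : a = b
    · simp [h]
    · simp [h, Ne.symm h]
  -- eigenvalue equation in coordinates
  have heig' : ∀ s, s < n → ∀ a, ∑ b, L a b * q s b = lam s * q s a := by
    intro s hs a
    have := congrFun (heig s hs) a
    simpa [Matrix.mulVec, dotProduct] using this
  -- the swapped eigenvector is still an eigenvector
  have hPeig : ∀ s, s < n → ∀ a, ∑ b, L a b * q s (σ b) = lam s * q s (σ a) := by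
    intro s hs a
    calc ∑ b, L a b * q s (σ b) = ∑ b, L (σ a) (σ b) * q s (σ b) := by
          refine Finset.sum_congr rfl fun b _ => ?_
          rw [hLσ]
      _ = ∑ b, L (σ a) b * q s b := Equiv.sum_comp σ (fun b => L (σ a) b * q s b)
      _ = lam s * q s (σ a) := heig' s hs (σ a)
  -- completeness (rows of the orthogonal matrix are orthonormal)
  have hcomp : ∀ a b : Fin n, ∑ s ∈ Finset.range n, q s a * q s b = if a = b then 1 else 0 := by
    intro a b
    let Q : Matrix (Fin n) (Fin n) ℝ := Matrix.of fun s a => q (s : ℕ) a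
    have h1 : Q * Qᵀ = 1 := by
      ext s t
      have hst := horth s s.isLt t t.isLt
      simp only [Matrix.mul_apply, Matrix.transpose_apply, Matrix.one_apply, Q, Matrix.of_apply]
      rw [hst]
      simp [Fin.val_inj]
    have h2 : Qᵀ * Q = 1 := mul_eq_one_comm.mp h1
    have h3 := congrFun (congrFun h2 a) b
    simp only [Matrix.mul_apply, Matrix.transpose_apply, Matrix.one_apply, Q,
      Matrix.of_apply] at h3
    rw [← Fin.sum_univ_eq_sum_range (fun s => q s a * q s b) n, ← h3]
  -- expansion coefficients of the swapped eigenvectors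
  set c : ℕ → ℕ → ℝ := fun s t => ∑ a, q t a * q s (σ a) with hcdef
  -- vanishing of cross coefficients between different eigenvalues
  have hc0 : ∀ s t, s < n → t < n → lam s ≠ lam t → c s t = 0 := by
    intro s t hs ht hne
    have key : lam t * c s t = lam s * c s t := by
      calc lam t * c s t = ∑ a, (lam t * q t a) * q s (σ a) := by
            rw [hcdef]; simp only []
            rw [Finset.mul_sum]
            exact Finset.sum_congr rfl fun a _ => by ring
        _ = ∑ a, (∑ b, L a b * q t b) * q s (σ a) := by
            refine Finset.sum_congr rfl fun a _ => ?_
            rw [heig' t ht a]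
        _ = ∑ a, ∑ b, (L a b * q t b) * q s (σ a) := by
            refine Finset.sum_congr rfl fun a _ => ?_
            rw [Finset.sum_mul]
        _ = ∑ b, ∑ a, (L a b * q t b) * q s (σ a) := Finset.sum_comm
        _ = ∑ b, q t b * (∑ a, L b a * q s (σ a)) := by
            refine Finset.sum_congr rfl fun b _ => ?_
            rw [Finset.mul_sum]
            refine Finset.sum_congr rfl fun a _ => ?_
            rw [hLs a b]; ring
        _ = ∑ b, q t b * (lam s * q s (σ b)) := by
            refine Finset.sum_congr rfl fun b _ => ?_
            rw [hPeig s hs b]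
        _ = lam s * c s t := by
            rw [hcdef]; simp only []
            rw [Finset.mul_sum]
            exact Finset.sum_congr rfl fun b _ => by ring
    have : (lam t - lam s) * c s t = 0 := by linarith [key]
    rcases mul_eq_zero.mp this with h | h
    · exact absurd (by linarith : lam s = lam t) hne
    · exact h
  -- expansion of swapped eigenvectors in the eigenbasis
  have hexp : ∀ s, ∀ a : Fin n, q s (σ a) = ∑ t ∈ Finset.range n, c s t * q t a := by
    intro s a
    calc q s (σ a) = ∑ a' : Fin n, q s (σ a') * (if a' = a then 1 else 0) := by
          simp
      _ = ∑ a' : Fin n, q s (σ a') * ∑ t ∈ Finset.range n, q t a' * q t a := by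
          refine Finset.sum_congr rfl fun a' _ => ?_
          rw [hcomp a' a]
      _ = ∑ a' : Fin n, ∑ t ∈ Finset.range n, q s (σ a') * (q t a' * q t a) := by
          refine Finset.sum_congr rfl fun a' _ => ?_
          rw [Finset.mul_sum]
      _ = ∑ t ∈ Finset.range n, ∑ a' : Fin n, q s (σ a') * (q t a' * q t a) := Finset.sum_comm
      _ = ∑ t ∈ Finset.range n, c s t * q t a := by
          refine Finset.sum_congr rfl fun t _ => ?_
          rw [hcdef]; simp only []
          rw [Finset.sum_mul]
          exact Finset.sum_congr rfl fun a' _ => by ring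
  -- orthonormality of coefficient rows
  have hcorth : ∀ t t', t < n → t' < n →
      ∑ s ∈ Finset.range n, c s t * c s t' = if t = t' then 1 else 0 := by
    intro t t' ht ht'
    calc ∑ s ∈ Finset.range n, c s t * c s t'
        = ∑ s ∈ Finset.range n, ∑ a : Fin n, ∑ b : Fin n,
            (q t a * q t' b) * (q s (σ a) * q s (σ b)) := by
          refine Finset.sum_congr rfl fun s _ => ?_
          rw [hcdef]; simp only []
          rw [Finset.sum_mul_sum]
          exact Finset.sum_congr rfl fun a _ => Finset.sum_congr rfl fun b _ => by ring
      _ = ∑ a : Fin n, ∑ b : Fin n, (q t a * q t' b) *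
            ∑ s ∈ Finset.range n, q s (σ a) * q s (σ b) := by
          rw [Finset.sum_comm]
          refine Finset.sum_congr rfl fun a _ => ?_
          rw [Finset.sum_comm]
          refine Finset.sum_congr rfl fun b _ => ?_
          rw [Finset.mul_sum]
      _ = ∑ a : Fin n, ∑ b : Fin n, (q t a * q t' b) * (if a = b then 1 else 0) := by
          refine Finset.sum_congr rfl fun a _ => Finset.sum_congr rfl fun b _ => ?_
          rw [hcomp (σ a) (σ b)]
          simp [σ.injective.eq_iff]
      _ = ∑ a : Fin n, q t a * q t' a := by
          refine Finset.sum_congr rfl fun a _ => ?_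
          simp
      _ = if t = t' then 1 else 0 := horth t ht t' ht'
  -- the main invariance statement for nontrivial cuts
  have key : 0 < r → lam (r - 1) ≠ lam r →
      ∀ a b : Fin n, ∑ s ∈ Finset.range r, q s (σ a) * q s (σ b)
        = ∑ s ∈ Finset.range r, q s a * q s b := by
    intro hrpos hgapne a b
    have hgap : lam r < lam (r - 1) :=
      lt_of_le_of_ne (hdesc (r - 1) r (Nat.sub_le r 1) hr) (Ne.symm hgapne)
    -- cross-coefficients vanish across the cut
    have hvanish : ∀ s t, s < r → r ≤ t → t < n → c s t = 0 := by
      intro s t hs hts htn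
      have h1 : lam t ≤ lam r := hdesc r t hts htn
      have h2 : lam (r - 1) ≤ lam s :=
        hdesc s (r - 1) (Nat.le_sub_one_of_lt hs) (lt_of_le_of_lt (Nat.sub_le r 1) hr)
      exact hc0 s t (lt_of_lt_of_le hs (le_of_lt hr)) htn (by intro h; rw [h] at h2; linarith)
    have hvanish' : ∀ s t, r ≤ s → s < n → t < r → c s t = 0 := by
      intro s t hrs hsn ht
      have h1 : lam s ≤ lam r := hdesc r s hrs hsn
      have h2 : lam (r - 1) ≤ lam t :=
        hdesc t (r - 1) (Nat.le_sub_one_of_lt ht) (lt_of_le_of_lt (Nat.sub_le r 1) hr)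
      exact hc0 s t hsn (lt_of_lt_of_le ht (le_of_lt hr)) (by intro h; rw [← h] at h2; linarith)
    calc ∑ s ∈ Finset.range r, q s (σ a) * q s (σ b)
        = ∑ s ∈ Finset.range r,
            (∑ t ∈ Finset.range n, c s t * q t a) * (∑ t' ∈ Finset.range n, c s t' * q t' b) := by
          refine Finset.sum_congr rfl fun s hs => ?_
          rw [hexp s a, hexp s b]
      _ = ∑ s ∈ Finset.range r, ∑ t ∈ Finset.range n, ∑ t' ∈ Finset.range n,
            (c s t * c s t') * (q t a * q t' b) := by
          refine Finset.sum_congr rfl fun s _ => ?_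
          rw [Finset.sum_mul_sum]
          exact Finset.sum_congr rfl fun t _ => Finset.sum_congr rfl fun t' _ => by ring
      _ = ∑ t ∈ Finset.range n, ∑ t' ∈ Finset.range n,
            (∑ s ∈ Finset.range r, c s t * c s t') * (q t a * q t' b) := by
          rw [Finset.sum_comm]
          refine Finset.sum_congr rfl fun t _ => ?_
          rw [Finset.sum_comm]
          refine Finset.sum_congr rfl fun t' _ => ?_
          rw [Finset.sum_mul]
      _ = ∑ t ∈ Finset.range n,
            (if t < r then q t a * q t b else 0) := by
          refine Finset.sum_congr rfl fun t htm => ?_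
          have htn : t < n := Finset.mem_range.mp htm
          by_cases htr : t < r
          · rw [if_pos htr]
            calc ∑ t' ∈ Finset.range n, (∑ s ∈ Finset.range r, c s t * c s t') * (q t a * q t' b)
                = ∑ t' ∈ Finset.range n,
                    (if t' = t then q t a * q t' b else 0) := by
                  refine Finset.sum_congr rfl fun t' ht'm => ?_
                  have ht'n : t' < n := Finset.mem_range.mp ht'm
                  by_cases ht'r : t' < r
                  · have : ∑ s ∈ Finset.range r, c s t * c s t'
                        = ∑ s ∈ Finset.range n, c s t * c s t' := by
                      refine Finset.sum_subset
                        (Finset.range_subset_range.mpr (le_of_lt hr)) fun s hsm hsn => ?_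
                      have hs1 : s < n := Finset.mem_range.mp hsm
                      have hs2 : r ≤ s := le_of_not_gt (fun h => hsn (Finset.mem_range.mpr h))
                      rw [hvanish' s t hs2 hs1 htr, zero_mul]
                    rw [this, hcorth t t' htn ht'n]
                    by_cases h : t = t'
                    · simp [h]
                    · simp [h, Ne.symm h]
                  · have hrt' : r ≤ t' := le_of_not_gt ht'r
                    have : ∑ s ∈ Finset.range r, c s t * c s t' = 0 := by
                      refine Finset.sum_eq_zero fun s hsm => ?_
                      rw [hvanish s t' (Finset.mem_range.mp hsm) hrt' ht'n, mul_zero]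
                    rw [this, zero_mul]
                    rw [if_neg]
                    intro h
                    exact ht'r (h ▸ htr)
              _ = q t a * q t b := by
                  rw [Finset.sum_ite_eq' (Finset.range n) t (fun t' => q t a * q t' b)]
                  simp [htn]
          · rw [if_neg htr]
            refine Finset.sum_eq_zero fun t' _ => ?_
            have : ∑ s ∈ Finset.range r, c s t * c s t' = 0 := by
              refine Finset.sum_eq_zero fun s hsm => ?_
              rw [hvanish s t (Finset.mem_range.mp hsm) (le_of_not_gt htr) htn, zero_mul]
            rw [this, zero_mul]
      _ = ∑ t ∈ Finset.range r, q t a * q t b := by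
          rw [← Finset.sum_subset (Finset.range_subset_range.mpr (le_of_lt hr))]
          · exact Finset.sum_congr rfl fun t htm => if_pos (Finset.mem_range.mp htm)
          · intro t _ htn
            exact if_neg (fun h => htn (Finset.mem_range.mpr h))
  -- finish: compare the two LEC values
  rw [hlec r i, hlec r j, hqlast i, hqlast j]
  congr 1
  rcases hcut with hr0 | hrn1 | hgapne
  · rw [hr0]; simp
  · -- r = n - 1 : use completeness
    subst hrn1
    have htot : ∀ a : Fin n, ∑ s ∈ Finset.range n, q s a ^ 2 = 1 := by
      intro a
      have := hcomp a a
      rw [if_pos rfl] at this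
      rw [← this]
      exact Finset.sum_congr rfl fun s _ => pow_two (q s a)
    have hsplit : ∀ a : Fin n, ∑ s ∈ Finset.range (n - 1), q s a ^ 2
        = 1 - q (n - 1) a ^ 2 := by
      intro a
      have h1 : n - 1 + 1 = n := Nat.succ_pred_eq_of_pos hn
      have h2 := htot a
      rw [← h1, Finset.sum_range_succ] at h2
      linarith
    rw [hsplit i, hsplit j, hqlast i, hqlast j]
  · have hrpos : 0 < r := by
      rcases Nat.eq_zero_or_pos r with h | h
      · exfalso; apply hgapne; rw [h]
      · exact h
    have := key hrpos hgapne j j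
    rw [hσj] at this
    calc ∑ s ∈ Finset.range r, q s i ^ 2
        = ∑ s ∈ Finset.range r, q s i * q s i :=
          Finset.sum_congr rfl fun s _ => pow_two (q s i)
      _ = ∑ s ∈ Finset.range r, q s j * q s j := this
      _ = ∑ s ∈ Finset.range r, q s j ^ 2 :=
          Finset.sum_congr rfl fun s _ => (pow_two (q s j)).symm
end

section
/- (Periphery property.) Suppose node i has degree 1 and is connected only to node j (i.e., A_{ij} = 1 and d_i = 1). Then for every order r ∈ {0, ..., n−1}, the LEC score of node i does not exceed that of node j: c_i^{LEC(r)} ≤ c_j^{LEC(r)}. -/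
open Matrix Finset

/-- Periphery property: if node `i` has degree 1 and is connected
to node `j`, then for every order `r ∈ {0,…,n−1}`, `c_i^{LEC(r)} ≤ c_j^{LEC(r)}`. -/
theorem lec_periphery
    (n : ℕ) (hn : 0 < n)
    (A : Matrix (Fin n) (Fin n) ℝ)
    (hA01 : ∀ i j, A i j = 0 ∨ A i j = 1)
    (hAsym : ∀ i j, A i j = A j i)
    (hAdiag : ∀ i, A i i = 0)
    (d : Fin n → ℝ) (hd : ∀ i, d i = ∑ j, A i j)
    (L : Matrix (Fin n) (Fin n) ℝ) (hLdef : L = Matrix.diagonal d - A)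
    (q : ℕ → Fin n → ℝ) (lam : ℕ → ℝ)
    (heig : ∀ s, s < n → L *ᵥ q s = lam s • q s)
    (horth : ∀ s, s < n → ∀ t, t < n → ∑ i, q s i * q t i = if s = t then 1 else 0)
    (hdesc : ∀ s t, s ≤ t → t < n → lam t ≤ lam s)
    (hlam0 : lam (n - 1) = 0)
    (hqlast : ∀ i, q (n - 1) i = 1 / Real.sqrt n)
    (lec : ℕ → Fin n → ℝ)
    (hlec : ∀ r i, lec r i = (q (n - 1) i) ^ 2 + ∑ s ∈ Finset.range r, (q s i) ^ 2)
    (i j : Fin n) (hij : A i j = 1) (hdi : d i = 1)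
    (r : ℕ) (hr : r < n) :
    lec r i ≤ lec r j := by
  have hA_nonneg : ∀ k l, 0 ≤ A k l := by
    intro k l; rcases hA01 k l with h | h <;> simp [h]
  -- all off-`j` entries of row `i` vanish
  have hrow : ∀ k, k ≠ j → A i k = 0 := by
    intro k hk
    have hsum : ∑ l ∈ Finset.univ.erase j, A i l = 0 := by
      have h1 : (1 : ℝ) = ∑ l, A i l := by rw [← hdi, hd]
      have h2 : ∑ l, A i l = A i j + ∑ l ∈ Finset.univ.erase j, A i l :=
        (Finset.add_sum_erase _ _ (Finset.mem_univ j)).symm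
      rw [h2, hij] at h1; linarith
    have h3 := (Finset.sum_eq_zero_iff_of_nonneg
      (fun l _ => hA_nonneg i l)).mp hsum
    exact h3 k (Finset.mem_erase.mpr ⟨hk, Finset.mem_univ k⟩)
  -- key relation between the entries at i and j of each eigenvector
  have key : ∀ s, s < n → q s j = (1 - lam s) * q s i := by
    intro s hs
    have h1 := congrFun (heig s hs) i
    rw [hLdef] at h1
    have hLv : ((Matrix.diagonal d - A) *ᵥ q s) i = q s i - q s j := by
      rw [Matrix.sub_mulVec]
      have h3 : (Matrix.diagonal d *ᵥ q s) i = q s i := by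
        rw [Matrix.mulVec_diagonal, hdi]; ring
      have h4 : (A *ᵥ q s) i = q s j := by
        show ∑ k, A i k * q s k = q s j
        rw [Finset.sum_eq_single j]
        · rw [hij]; ring
        · intro k _ hk; rw [hrow k hk]; ring
        · intro h; exact absurd (Finset.mem_univ j) h
      simp [h3, h4]
    rw [hLv] at h1
    have h2 : q s i - q s j = lam s * q s i := by
      simpa using h1
    linarith [h2]
  -- nonnegativity of eigenvalues
  have hlam_nonneg : ∀ s, s < n → 0 ≤ lam s := by
    intro s hs
    have := hdesc s (n - 1) (by omega) (by omega)
    rw [hlam0] at this; linarith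
  -- row normalization: rows of the eigenvector matrix have unit norm
  have hnorm : ∀ k : Fin n, ∑ s ∈ Finset.range n, (q s k) ^ 2 = 1 := by
    intro k
    set M : Matrix (Fin n) (Fin n) ℝ := Matrix.of (fun s k => q s.val k) with hM
    have hMMT : M * Mᵀ = 1 := by
      ext s t
      have := horth s.val s.isLt t.val t.isLt
      simp only [Matrix.mul_apply, Matrix.transpose_apply, Matrix.one_apply, hM,
        Matrix.of_apply]
      rw [this]
      by_cases h : s = t
      · simp [h]
      · have : ¬ (s.val = t.val) := fun hv => h (Fin.ext hv)
        simp [h, this]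
    have hTM : Mᵀ * M = 1 := mul_eq_one_comm.mp hMMT
    have h1 : (Mᵀ * M) k k = 1 := by rw [hTM]; simp
    have h2 : ∑ s : Fin n, q s.val k ^ 2 = 1 := by
      rw [Matrix.mul_apply] at h1
      simp only [Matrix.transpose_apply, hM, Matrix.of_apply] at h1
      rw [← h1]
      apply Finset.sum_congr rfl
      intro s _; ring
    rw [← Fin.sum_univ_eq_sum_range (fun s => q s k ^ 2) n]
    exact h2
  -- reduce to comparing the sums over `range r`
  rw [hlec r i, hlec r j, hqlast i, hqlast j]
  have hred : ∑ s ∈ Finset.range r, q s i ^ 2 ≤ ∑ s ∈ Finset.range r, q s j ^ 2 := by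
    by_cases hcase : ∀ s, s < r → 2 ≤ lam s
    · apply Finset.sum_le_sum
      intro s hs
      have hsr : s < r := Finset.mem_range.mp hs
      have hsn : s < n := lt_trans hsr hr
      rw [key s hsn]
      have h2 := hcase s hsr
      nlinarith [sq_nonneg (q s i), mul_nonneg (mul_nonneg
        (by linarith : (0:ℝ) ≤ lam s - 2) (by linarith : (0:ℝ) ≤ lam s))
        (sq_nonneg (q s i))]
    · push_neg at hcase
      obtain ⟨s0, hs0r, hs0⟩ := hcase
      have htail : ∑ s ∈ Finset.Ico r n, q s j ^ 2 ≤ ∑ s ∈ Finset.Ico r n, q s i ^ 2 := by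
        apply Finset.sum_le_sum
        intro s hs
        obtain ⟨hrs, hsn⟩ := Finset.mem_Ico.mp hs
        have hle : lam s ≤ lam s0 := hdesc s0 s (by omega) hsn
        have h0 : 0 ≤ lam s := hlam_nonneg s hsn
        rw [key s hsn]
        nlinarith [mul_nonneg (mul_nonneg h0
          (by linarith : (0:ℝ) ≤ 2 - lam s)) (sq_nonneg (q s i))]
      have hi := hnorm i
      have hj := hnorm j
      have hsplit_i : ∑ s ∈ Finset.range r, q s i ^ 2 + ∑ s ∈ Finset.Ico r n, q s i ^ 2
          = ∑ s ∈ Finset.range n, q s i ^ 2 :=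
        Finset.sum_range_add_sum_Ico _ (le_of_lt hr)
      have hsplit_j : ∑ s ∈ Finset.range r, q s j ^ 2 + ∑ s ∈ Finset.Ico r n, q s j ^ 2
          = ∑ s ∈ Finset.range n, q s j ^ 2 :=
        Finset.sum_range_add_sum_Ico _ (le_of_lt hr)
      linarith
  linarith
end

section
/- (Isolated-node property.) Suppose node j is isolated, i.e., d_j = 0. Then for every order r ∈ {1, ..., n−1} with λ_r > 0, the LEC score of node j equals the baseline: c_j^{LEC(r)} = 1/n. In particular, if G has exactly k isolated nodes and the subgraph induced on the remaining n−k vertices is connected, then c_j^{LEC(r)} = 1/n for every isolated node j and every order r with 1 ≤ r ≤ n−k−1. -/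
open Matrix Finset


lemma edge_const {n : ℕ}
    (A : Matrix (Fin n) (Fin n) ℝ)
    (hA01 : ∀ i j, A i j = 0 ∨ A i j = 1)
    (hAsym : ∀ i j, A i j = A j i)
    (d : Fin n → ℝ) (hd : ∀ i, d i = ∑ j, A i j)
    (L : Matrix (Fin n) (Fin n) ℝ) (hLdef : L = Matrix.diagonal d - A)
    (x : Fin n → ℝ) (hx : L *ᵥ x = 0) :
    ∀ i j, A i j = 1 → x i = x j := by
  have h1 : ∀ i, d i * x i - ∑ j, A i j * x j = 0 := by
    intro i
    have := congrFun hx i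
    rw [hLdef, Matrix.sub_mulVec] at this
    have e : (diagonal d *ᵥ x) i = d i * x i := Matrix.mulVec_diagonal d x i
    have e2 : (A *ᵥ x) i = ∑ j, A i j * x j := rfl
    rw [Pi.sub_apply, e, e2] at this
    simpa using this
  have key : ∑ i, ∑ j, A i j * (x i - x j)^2 = 0 := by
    have e1 : ∀ i : Fin n, ∑ j, A i j * (x i - x j)^2
        = ∑ j, (A i j * x i ^ 2 + A i j * x j ^ 2 - 2 * (A i j * x i * x j)) := by
      intro i; apply Finset.sum_congr rfl; intro j _; ring
    calc ∑ i, ∑ j, A i j * (x i - x j)^2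
        = ∑ i, (∑ j, A i j * x i ^ 2 + ∑ j, A i j * x j ^ 2 - 2 * ∑ j, (A i j * x i * x j)) := by
          apply Finset.sum_congr rfl; intro i _
          rw [e1]
          simp [Finset.sum_sub_distrib, Finset.sum_add_distrib, Finset.mul_sum]
      _ = ∑ i, (d i * x i ^ 2) + ∑ i, ∑ j, A i j * x j ^ 2 - 2 * ∑ i, ∑ j, (A i j * x i * x j) := by
          rw [Finset.sum_sub_distrib, Finset.sum_add_distrib, Finset.mul_sum]
          congr 1
          · congr 1
            apply Finset.sum_congr rfl; intro i _
            rw [hd, Finset.sum_mul]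
      _ = ∑ i, (d i * x i ^ 2) + ∑ j, (d j * x j ^ 2) - 2 * ∑ i, x i * ∑ j, (A i j * x j) := by
          congr 1
          · congr 1
            rw [Finset.sum_comm]
            apply Finset.sum_congr rfl; intro j _
            rw [hd, Finset.sum_mul]
            exact Finset.sum_congr rfl fun i _ => by rw [hAsym]
          · congr 1
            apply Finset.sum_congr rfl; intro i _
            rw [Finset.mul_sum]
            exact Finset.sum_congr rfl fun j _ => by ring
      _ = 2 * ∑ i, x i * (d i * x i - ∑ j, A i j * x j) := by
          rw [Finset.mul_sum]
          have : ∀ i : Fin n, x i * (d i * x i - ∑ j, A i j * x j)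
              = d i * x i ^2 - x i * ∑ j, A i j * x j := by intro i; ring
          simp only [this]
          rw [Finset.sum_sub_distrib]
          have e2 : ∑ i : Fin n, 2 * (x i * ∑ j, A i j * x j) = 2 * ∑ i : Fin n, x i * ∑ j, A i j * x j := by
            rw [Finset.mul_sum]
          rw [e2]; ring
      _ = 0 := by simp only [h1]; simp
  have hnn : ∀ i ∈ Finset.univ, (0:ℝ) ≤ ∑ j, A i j * (x i - x j)^2 := by
    intro i _
    apply Finset.sum_nonneg
    intro j _
    rcases hA01 i j with h | h <;> simp [h]
    positivity
  intro i j hij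
  have h2 := (Finset.sum_eq_zero_iff_of_nonneg hnn).mp key i (Finset.mem_univ i)
  have hnn2 : ∀ j ∈ Finset.univ, (0:ℝ) ≤ A i j * (x i - x j)^2 := by
    intro j _
    rcases hA01 i j with h | h <;> simp [h]
    positivity
  have h3 := (Finset.sum_eq_zero_iff_of_nonneg hnn2).mp h2 j (Finset.mem_univ j)
  rw [hij, one_mul] at h3
  have := pow_eq_zero_iff (n := 2) (by norm_num) |>.mp h3
  linarith [sub_eq_zero.mp this]

lemma li_of_orth {n m : ℕ} (v : Fin m → Fin n → ℝ)
    (h : ∀ s t, ∑ i, v s i * v t i = if s = t then 1 else 0) :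
    LinearIndependent ℝ v := by
  rw [Fintype.linearIndependent_iff]
  intro g hg t
  have h2 := congrArg (fun f : Fin n → ℝ => ∑ i, f i * v t i) hg
  simp only [Finset.sum_apply, Pi.smul_apply, smul_eq_mul, Pi.zero_apply, zero_mul,
    Finset.sum_const_zero] at h2
  have h3 : ∑ s, g s * ∑ i, v s i * v t i = 0 := by
    rw [← h2]
    calc ∑ s, g s * ∑ i, v s i * v t i
        = ∑ s, ∑ i, g s * (v s i * v t i) := by simp [Finset.mul_sum]
      _ = ∑ i, ∑ s, g s * (v s i * v t i) := Finset.sum_comm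
      _ = ∑ i, (∑ s, g s * v s i) * v t i := by
          apply Finset.sum_congr rfl
          intro i _
          rw [Finset.sum_mul]
          exact Finset.sum_congr rfl fun s _ => by ring
  simp only [h, mul_ite, mul_one, mul_zero, Finset.sum_ite_eq', Finset.mem_univ,
    if_true] at h3
  exact h3

lemma walk_const {n : ℕ} (d : Fin n → ℝ) (G : SimpleGraph (Fin n)) (x : Fin n → ℝ)
    (hedge : ∀ i j, G.Adj i j → x i = x j)
    (hconn : (SimpleGraph.induce {v : Fin n | d v ≠ 0} G).Connected) :
    ∀ i j : Fin n, d i ≠ 0 → d j ≠ 0 → x i = x j := by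
  have key : ∀ (a b : {v : Fin n | d v ≠ 0}),
      (SimpleGraph.induce {v : Fin n | d v ≠ 0} G).Walk a b → x a.1 = x b.1 := by
    intro a b w
    induction w with
    | nil => rfl
    | cons h p ih =>
      exact (hedge _ _ h).trans ih
  intro i j hi hj
  obtain ⟨w⟩ := hconn.preconnected ⟨i, hi⟩ ⟨j, hj⟩
  exact key _ _ w

lemma card_le_of_const {n m : ℕ} (d : Fin n → ℝ) (t0 : Fin n) (ht0 : d t0 ≠ 0)
    (v : Fin m → Fin n → ℝ) (hli : LinearIndependent ℝ v)
    (hmem : ∀ s i j, d i ≠ 0 → d j ≠ 0 → v s i = v s j) :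
    m ≤ {u : Fin n | d u = 0}.ncard + 1 := by
  classical
  set W : Submodule ℝ (Fin n → ℝ) :=
    { carrier := {x | ∀ i j, d i ≠ 0 → d j ≠ 0 → x i = x j}
      add_mem' := fun ha hb i j hi hj => by
        simp only [Pi.add_apply]; rw [ha i j hi hj, hb i j hi hj]
      zero_mem' := fun i j _ _ => rfl
      smul_mem' := fun c x hx i j hi hj => by
        simp only [Pi.smul_apply]; rw [hx i j hi hj] } with hW
  have hWmem : ∀ x : Fin n → ℝ, x ∈ W ↔ ∀ i j, d i ≠ 0 → d j ≠ 0 → x i = x j := fun x => Iff.rfl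
  set w : Fin m → W := fun s => ⟨v s, (hWmem (v s)).mpr (hmem s)⟩ with hw
  have hliw : LinearIndependent ℝ w := by
    apply LinearIndependent.of_comp W.subtype
    have : W.subtype ∘ w = v := rfl
    rw [this]
    exact hli
  have hcard : m ≤ Module.finrank ℝ W := by
    simpa using hliw.fintype_card_le_finrank
  let φ : W →ₗ[ℝ] ({u : Fin n // d u = 0} → ℝ) × ℝ :=
    { toFun := fun x => (fun u => x.1 u.1, x.1 t0)
      map_add' := fun x y => by ext <;> simp
      map_smul' := fun c x => by ext <;> simp }
  have hinj : Function.Injective φ := by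
    rw [← LinearMap.ker_eq_bot]
    rw [LinearMap.ker_eq_bot']
    intro x hx
    have h1 : ∀ u : {u : Fin n // d u = 0}, x.1 u.1 = 0 := fun u => congrFun (congrArg Prod.fst hx) u
    have h2 : x.1 t0 = 0 := congrArg Prod.snd hx
    apply Subtype.ext
    funext i
    by_cases hdi : d i = 0
    · exact h1 ⟨i, hdi⟩
    · exact (x.2 i t0 hdi ht0).trans h2
  have hrank : Module.finrank ℝ W ≤ {u : Fin n | d u = 0}.ncard + 1 := by
    have := LinearMap.finrank_le_finrank_of_injective hinj
    rw [Module.finrank_prod, Module.finrank_fintype_fun_eq_card, Module.finrank_self] at this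
    rwa [Set.ncard_eq_toFinset_card', Set.toFinset_card]
  exact hcard.trans hrank


/-- Isolated-node property: if node `j` is isolated (`d j = 0`),
then for every order `r ∈ {1,…,n−1}` whose last included eigenvalue is positive
(paper's `λ_r > 0`, i.e. `0 < lam (r-1)`), `c_j^{LEC(r)} = 1/n`.  In particular, if
`G` has exactly `k` isolated nodes and the subgraph induced on the remaining
vertices is connected, then `c_j^{LEC(r)} = 1/n` for every isolated `j` and every
`1 ≤ r ≤ n − k − 1`. -/
theorem lec_isolated
    (n : ℕ) (hn : 0 < n)
    (A : Matrix (Fin n) (Fin n) ℝ)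
    (hA01 : ∀ i j, A i j = 0 ∨ A i j = 1)
    (hAsym : ∀ i j, A i j = A j i)
    (hAdiag : ∀ i, A i i = 0)
    (d : Fin n → ℝ) (hd : ∀ i, d i = ∑ j, A i j)
    (L : Matrix (Fin n) (Fin n) ℝ) (hLdef : L = Matrix.diagonal d - A)
    (q : ℕ → Fin n → ℝ) (lam : ℕ → ℝ)
    (heig : ∀ s, s < n → L *ᵥ q s = lam s • q s)
    (horth : ∀ s, s < n → ∀ t, t < n → ∑ i, q s i * q t i = if s = t then 1 else 0)
    (hdesc : ∀ s t, s ≤ t → t < n → lam t ≤ lam s)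
    (hlam0 : lam (n - 1) = 0)
    (hqlast : ∀ i, q (n - 1) i = 1 / Real.sqrt n)
    (lec : ℕ → Fin n → ℝ)
    (hlec : ∀ r i, lec r i = (q (n - 1) i) ^ 2 + ∑ s ∈ Finset.range r, (q s i) ^ 2)
    (G : SimpleGraph (Fin n)) (hGA : ∀ i j : Fin n, G.Adj i j ↔ A i j = 1) :
    (∀ j : Fin n, d j = 0 → ∀ r : ℕ, 1 ≤ r → r < n → 0 < lam (r - 1) → lec r j = 1 / n)
    ∧ (∀ k : ℕ, {v : Fin n | d v = 0}.ncard = k →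
        (SimpleGraph.induce {v : Fin n | d v ≠ 0} G).Connected →
        ∀ j : Fin n, d j = 0 → ∀ r : ℕ, 1 ≤ r → r ≤ n - k - 1 → lec r j = 1 / n) := by
  have part1 : ∀ j : Fin n, d j = 0 → ∀ r : ℕ, 1 ≤ r → r < n → 0 < lam (r - 1) →
      lec r j = 1 / n := by
    intro j hj r hr1 hrn hpos
    have hArow : ∀ i, A j i = 0 := by
      have h0 : ∑ i, A j i = 0 := by rw [← hd]; exact hj
      intro i
      have hnn : ∀ i ∈ Finset.univ, (0:ℝ) ≤ A j i := by
        intro i _; rcases hA01 j i with h | h <;> simp [h]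
      exact (Finset.sum_eq_zero_iff_of_nonneg hnn).mp h0 i (Finset.mem_univ i)
    have hq0 : ∀ s, s < r → q s j = 0 := by
      intro s hs
      have hsn : s < n := lt_trans hs hrn
      have hev := congrFun (heig s hsn) j
      have hLj : (L *ᵥ q s) j = 0 := by
        rw [hLdef, Matrix.sub_mulVec, Pi.sub_apply, Matrix.mulVec_diagonal]
        have e2 : (A *ᵥ q s) j = ∑ i, A j i * q s i := rfl
        rw [e2, hj]
        simp [hArow]
      rw [hLj] at hev
      have hls : 0 < lam s := lt_of_lt_of_le hpos (hdesc s (r-1) (by omega) (by omega))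
      have hev' : lam s * q s j = 0 := by
        simpa using hev.symm
      rcases mul_eq_zero.mp hev' with h | h
      · exact absurd h (ne_of_gt hls)
      · exact h
    rw [hlec]
    have hz : ∑ s ∈ Finset.range r, q s j ^ 2 = 0 :=
      Finset.sum_eq_zero fun s hs => by rw [hq0 s (Finset.mem_range.mp hs)]; ring
    rw [hz, add_zero, hqlast, div_pow, one_pow, Real.sq_sqrt (by positivity : (0:ℝ) ≤ (n:ℝ))]
  refine ⟨part1, ?_⟩
  intro k hk hconn j hj r hr1 hr2
  obtain ⟨t0, ht0⟩ := hconn.nonempty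
  have ht0' : d t0 ≠ 0 := ht0
  have hk1 : 1 ≤ k := by
    rw [← hk]
    exact (Set.ncard_pos (Set.toFinite _)).mpr ⟨j, hj⟩
  have hn2 : k + 2 ≤ n := by omega
  have hrn : r < n := by omega
  have hge : 0 ≤ lam (r - 1) := by
    rw [← hlam0]
    exact hdesc (r-1) (n-1) (by omega) (by omega)
  have hpos : 0 < lam (r - 1) := by
    rcases lt_or_eq_of_le hge with h | h
    · exact h
    · exfalso
      have heq : lam (r - 1) = 0 := h.symm
      set v : Fin (k+2) → Fin n → ℝ := fun s => q (r - 1 + s.1) with hv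
      have hidx : ∀ s : Fin (k+2), r - 1 + s.1 < n := by
        intro s; have := s.2; omega
      have hlz : ∀ s : Fin (k+2), lam (r - 1 + s.1) = 0 := by
        intro s
        have hle : lam (r - 1 + s.1) ≤ lam (r - 1) :=
          hdesc (r-1) (r-1+s.1) (by omega) (hidx s)
        have hge2 : lam (n-1) ≤ lam (r-1+s.1) :=
          hdesc (r-1+s.1) (n-1) (by omega) (by omega)
        rw [hlam0] at hge2
        linarith [heq ▸ hle]
      have horth' : ∀ s t : Fin (k+2), ∑ i, v s i * v t i = if s = t then 1 else 0 := by
        intro s t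
        rw [hv]
        rw [horth _ (hidx s) _ (hidx t)]
        by_cases h' : s = t
        · subst h'; simp
        · rw [if_neg, if_neg h']
          intro hc
          exact h' (Fin.ext (by omega))
      have hli := li_of_orth v horth'
      have hker : ∀ s : Fin (k+2), L *ᵥ v s = 0 := by
        intro s
        rw [hv]
        rw [heig _ (hidx s), hlz s, zero_smul]
      have hmem : ∀ (s : Fin (k+2)) (i j' : Fin n), d i ≠ 0 → d j' ≠ 0 → v s i = v s j' := by
        intro s
        apply walk_const d G (v s) _ hconn
        intro i j' hadj
        exact edge_const A hA01 hAsym d hd L hLdef (v s) (hker s) i j' ((hGA i j').mp hadj)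
      have hfin := card_le_of_const d t0 ht0' v hli hmem
      rw [hk] at hfin
      omega
  exact part1 j hj r hr1 hrn hpos
end

section
/- (Core property.) Let 1 ≤ k ≤ n−1 and suppose G is the core-periphery graph in which the hub nodes 1,...,k each have degree n−1 (each hub is adjacent to every other node), and each of the n−k peripheral nodes has degree k, being adjacent exactly to the k hubs. Then at LEC order k, every hub node h ∈ {1,...,k} receives the maximal score: c_h^{LEC(k)} = 1. -/
/-!
Let `v ⊥ 𝟙` satisfy `L v = μ v`. The hub rows of `L` read `μ v_h = n v_h` and the peripheral rows
`μ v_p = k v_p - ∑_{j hub} v_j`, so `v` vanishes on the hubs unless `μ = n`, and `μ ≤ n` because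
`k < n`. A vector of the `n`-eigenspace is determined by its hub coordinates, so that eigenspace
has dimension at most `k`. With indices counted from `0` and `q_{n-1} = 𝟙 / √n`, the eigenvalues
being sorted, `λ_s = n` for some `k ≤ s < n - 1` would put the `k + 1` orthonormal vectors
`q_0, …, q_k` into it; hence these `q_s` vanish on the hubs.
Finally a square matrix with orthonormal columns `q_s` has orthonormal rows as well, so
`∑_s q_s(h)² = 1`, and for a hub `h` the only nonzero terms of this sum are those of `LEC(k)`.
-/

open Matrix Finset

def laplacian {ι R : Type*} [Fintype ι] [DecidableEq ι] [Ring R] (A : Matrix ι ι R) :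
    Matrix ι ι R :=
  diagonal (fun i => ∑ j, A i j) - A

theorem laplacian_mulVec_apply {ι R : Type*} [Fintype ι] [DecidableEq ι] [Ring R]
    (A : Matrix ι ι R) (v : ι → R) (i : ι) :
    (laplacian A *ᵥ v) i = ∑ j, A i j * (v i - v j) := by
  rw [laplacian, sub_mulVec, Pi.sub_apply, mulVec_diagonal]
  simp only [mulVec, dotProduct, sum_mul, mul_sub, sum_sub_distrib]

structure IsCorePeriphery {n : ℕ} (k : ℕ) (A : Matrix (Fin n) (Fin n) ℝ) : Prop where
  adj_of_lt : ∀ i j : Fin n, i ≠ j → ((i : ℕ) < k ∨ (j : ℕ) < k) → A i j = 1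
  not_adj_of_le : ∀ i j : Fin n, k ≤ (i : ℕ) → k ≤ (j : ℕ) → A i j = 0

namespace IsCorePeriphery

variable {n k : ℕ} {A : Matrix (Fin n) (Fin n) ℝ} {v : Fin n → ℝ} {μ : ℝ} {i : Fin n}

theorem laplacian_mulVec_apply_of_lt (hA : IsCorePeriphery k A) (hi : (i : ℕ) < k) :
    (laplacian A *ᵥ v) i = n * v i - ∑ j, v j := by
  have hrow : ∀ j, A i j * (v i - v j) = v i - v j := by
    intro j
    rcases eq_or_ne i j with rfl | hij
    · simp
    · rw [hA.adj_of_lt i j hij (Or.inl hi), one_mul]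
  simp [laplacian_mulVec_apply, hrow, sum_sub_distrib]

theorem laplacian_mulVec_apply_of_le (hA : IsCorePeriphery k A) (hi : k ≤ (i : ℕ)) :
    (laplacian A *ᵥ v) i = k * v i - ∑ j : Fin n with j.val < k, v j := by
  have hrow : ∀ j, A i j * (v i - v j) = if (j : ℕ) < k then v i - v j else 0 := by
    intro j
    split_ifs with hj
    · rw [hA.adj_of_lt i j (by rintro rfl; omega) (Or.inr hj), one_mul]
    · rw [hA.not_adj_of_le i j hi (not_lt.mp hj), zero_mul]
  rw [laplacian_mulVec_apply, sum_congr rfl fun j _ => hrow j, ← sum_filter, sum_sub_distrib,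
    sum_const, Fin.card_filter_val_lt, min_eq_right (by omega), nsmul_eq_mul]

theorem apply_eq_zero_of_lt (hA : IsCorePeriphery k A) (hv : laplacian A *ᵥ v = μ • v)
    (hsum : ∑ j, v j = 0) (hμ : μ ≠ n) (hi : (i : ℕ) < k) : v i = 0 := by
  have hvi := congrFun hv i
  rw [hA.laplacian_mulVec_apply_of_lt hi, hsum, Pi.smul_apply, smul_eq_mul] at hvi
  have : (μ - n) * v i = 0 := by linear_combination -hvi
  exact (mul_eq_zero.mp this).resolve_left (sub_ne_zero.mpr hμ)

theorem eq_zero_of_forall_lt (hA : IsCorePeriphery k A) (hv : laplacian A *ᵥ v = μ • v)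
    (hμ : μ ≠ k) (hhub : ∀ j : Fin n, (j : ℕ) < k → v j = 0) : v = 0 := by
  funext i
  rcases lt_or_ge (i : ℕ) k with hi | hi
  · exact hhub i hi
  have hvi := congrFun hv i
  rw [hA.laplacian_mulVec_apply_of_le hi, sum_eq_zero fun j hj => hhub j (mem_filter.mp hj).2,
    Pi.smul_apply, smul_eq_mul] at hvi
  have : (μ - k) * v i = 0 := by linear_combination -hvi
  exact (mul_eq_zero.mp this).resolve_left (sub_ne_zero.mpr hμ)

theorem eigenvalue_le (hA : IsCorePeriphery k A) (hk : k ≤ n) (hv : laplacian A *ᵥ v = μ • v)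
    (hsum : ∑ j, v j = 0) (hv0 : v ≠ 0) : μ ≤ n := by
  by_contra! hμ
  have hkμ : (k : ℝ) < μ := lt_of_le_of_lt (by exact_mod_cast hk) hμ
  exact hv0 <| hA.eq_zero_of_forall_lt hv hkμ.ne' fun j hj =>
    hA.apply_eq_zero_of_lt hv hsum hμ.ne' hj

theorem finrank_eigenspace_le (hA : IsCorePeriphery k A) (hk : k < n) :
    Module.finrank ℝ (Module.End.eigenspace (toLin' (laplacian A)) n) ≤ k := by
  set E := Module.End.eigenspace (toLin' (laplacian A)) (n : ℝ)
  let restrict : E →ₗ[ℝ] Fin k → ℝ := LinearMap.funLeft ℝ ℝ (Fin.castLE hk.le) ∘ₗ E.subtype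
  have hinj : Function.Injective restrict := by
    refine (injective_iff_map_eq_zero restrict).mpr fun w hw => Subtype.ext ?_
    refine hA.eq_zero_of_forall_lt ?_ (Nat.cast_injective.ne hk.ne')
      fun j hj => congrFun hw ⟨j, hj⟩
    simpa using Module.End.mem_eigenspace_iff.mp w.2
  simpa using LinearMap.finrank_le_finrank_of_injective hinj

theorem eigenbasis_apply_eq_zero (hA : IsCorePeriphery k A) {q : ℕ → Fin n → ℝ} {lam : ℕ → ℝ}
    (heig : ∀ s < n, laplacian A *ᵥ q s = lam s • q s)
    (hli : LinearIndependent ℝ fun s : Fin n => q s)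
    (hsum : ∀ s < n - 1, ∑ j, q s j = 0)
    (hdesc : ∀ s t, s ≤ t → t < n → lam t ≤ lam s)
    {s : ℕ} (hks : k ≤ s) (hs : s < n - 1) (hi : (i : ℕ) < k) : q s i = 0 := by
  refine hA.apply_eq_zero_of_lt (heig s (by omega)) (hsum s hs) (fun hlam => ?_) hi
  have hmem : ∀ t : Fin (k + 1), q t ∈ Module.End.eigenspace (toLin' (laplacian A)) n := by
    intro t
    have ht : (t : ℕ) < n := by omega
    have hlamt : lam t = n := le_antisymm
      (hA.eigenvalue_le (by omega) (heig t ht) (hsum t (by omega)) (hli.ne_zero ⟨t, ht⟩))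
      (hlam ▸ hdesc t s (by omega) (by omega))
    rw [Module.End.mem_eigenspace_iff, toLin'_apply, heig t ht, hlamt]
  have hli' : LinearIndependent ℝ fun t : Fin (k + 1) => q t :=
    hli.comp (Fin.castLE (by omega)) (Fin.castLE_injective _)
  have hcard := (finrank_span_eq_card hli').symm.trans_le
    (Submodule.finrank_mono (Submodule.span_le.mpr (Set.range_subset_iff.mpr hmem)))
  have := hA.finrank_eigenspace_le (by omega)
  simp only [Fintype.card_fin] at hcard
  omega

end IsCorePeriphery

theorem lec_core_general
    (n : ℕ)
    (A : Matrix (Fin n) (Fin n) ℝ)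
    (d : Fin n → ℝ) (hd : ∀ i, d i = ∑ j, A i j)
    (L : Matrix (Fin n) (Fin n) ℝ) (hLdef : L = Matrix.diagonal d - A)
    (q : ℕ → Fin n → ℝ) (lam : ℕ → ℝ)
    (heig : ∀ s, s < n → L *ᵥ q s = lam s • q s)
    (horth : ∀ s, s < n → ∀ t, t < n → ∑ i, q s i * q t i = if s = t then 1 else 0)
    (hdesc : ∀ s t, s ≤ t → t < n → lam t ≤ lam s)
    (hqlast : ∀ i, q (n - 1) i = 1 / Real.sqrt n)
    (lec : ℕ → Fin n → ℝ)
    (hlec : ∀ r i, lec r i = (q (n - 1) i) ^ 2 + ∑ s ∈ Finset.range r, (q s i) ^ 2)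
    (k : ℕ) (hkn : k ≤ n - 1)
    (hhub : ∀ i j : Fin n, i ≠ j → ((i : ℕ) < k ∨ (j : ℕ) < k) → A i j = 1)
    (hper : ∀ i j : Fin n, k ≤ (i : ℕ) → k ≤ (j : ℕ) → A i j = 0) :
    ∀ h : Fin n, (h : ℕ) < k → lec k h = 1 := by
  intro h hh
  have hL : L = laplacian A := by rw [hLdef, laplacian, funext hd]
  set Q : Matrix (Fin n) (Fin n) ℝ := of fun s i => q s i
  have hQ : Q * Qᵀ = 1 := by
    ext s t
    simpa [Q, mul_apply, one_apply, Fin.val_inj] using horth s s.2 t t.2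
  have hsum : ∀ s < n - 1, ∑ i, q s i = 0 := fun s hs => by
    simpa [hqlast, ← sum_mul, show n ≠ 0 by omega, hs.ne] using
      horth s (by omega) (n - 1) (by omega)
  have hmid : ∑ s ∈ Ico k (n - 1), q s h ^ 2 = 0 := sum_eq_zero fun s hs => by
    rw [IsCorePeriphery.eigenbasis_apply_eq_zero ⟨hhub, hper⟩ (hL ▸ heig)
      (linearIndependent_rows_iff_isUnit.mpr (.of_mul_eq_one _ hQ)) hsum hdesc
      (mem_Ico.mp hs).1 (mem_Ico.mp hs).2 hh, sq, zero_mul]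
  have hcols : Qᵀ * Q = 1 := mul_eq_one_comm.mp hQ
  calc lec k h
        = ∑ s ∈ range k, q s h ^ 2 + ∑ s ∈ Ico k (n - 1), q s h ^ 2 + q (n - 1) h ^ 2 := by
        rw [hlec, hmid]; ring
    _ = ∑ s ∈ range n, q s h ^ 2 := by
        rw [sum_range_add_sum_Ico _ hkn, ← sum_range_succ, Nat.sub_one_add_one (by omega)]
    _ = 1 := by
        simpa [Q, mul_apply, sq, Fin.sum_univ_eq_sum_range (fun s => q s h * q s h)] using
          congrFun (congrFun hcols h) h

/-- Core property: in the core-periphery graph with `k` fully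
connected hub nodes (degree `n−1`) and `n−k` peripheral nodes adjacent exactly to
the hubs, every hub node receives the maximal LEC score `1` at order `k`. -/
theorem lec_core
    (n : ℕ) (hn : 0 < n)
    (A : Matrix (Fin n) (Fin n) ℝ)
    (hA01 : ∀ i j, A i j = 0 ∨ A i j = 1)
    (hAsym : ∀ i j, A i j = A j i)
    (hAdiag : ∀ i, A i i = 0)
    (d : Fin n → ℝ) (hd : ∀ i, d i = ∑ j, A i j)
    (L : Matrix (Fin n) (Fin n) ℝ) (hLdef : L = Matrix.diagonal d - A)
    (q : ℕ → Fin n → ℝ) (lam : ℕ → ℝ)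
    (heig : ∀ s, s < n → L *ᵥ q s = lam s • q s)
    (horth : ∀ s, s < n → ∀ t, t < n → ∑ i, q s i * q t i = if s = t then 1 else 0)
    (hdesc : ∀ s t, s ≤ t → t < n → lam t ≤ lam s)
    (hlam0 : lam (n - 1) = 0)
    (hqlast : ∀ i, q (n - 1) i = 1 / Real.sqrt n)
    (lec : ℕ → Fin n → ℝ)
    (hlec : ∀ r i, lec r i = (q (n - 1) i) ^ 2 + ∑ s ∈ Finset.range r, (q s i) ^ 2)
    (k : ℕ) (hk1 : 1 ≤ k) (hkn : k ≤ n - 1)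
    (hhub : ∀ i j : Fin n, i ≠ j → ((i : ℕ) < k ∨ (j : ℕ) < k) → A i j = 1)
    (hper : ∀ i j : Fin n, k ≤ (i : ℕ) → k ≤ (j : ℕ) → A i j = 0) :
    ∀ h : Fin n, (h : ℕ) < k → lec k h = 1 :=
  lec_core_general n A d hd L hLdef q lam heig horth hdesc hqlast lec hlec k hkn hhub hper
end

section
/- (Social loss identity for targeted intervention, Proposition 1.) Fix β ≥ 0 and a node i, and let e_i denote the i-th standard basis vector of ℝ^n. The matrix I_n + βL is invertible, and the social loss from neutralizing the shock at agent i satisfies (1_n − e_i)' (I_n + βL)^{−2} (1_n − e_i) = (n−1) − Σ_{j=1}^{n−1} (1 − ω_j) [q_j(i)]², where ω_j = (1 + β λ_j)^{−2}. -/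
/-!
With `P` the orthogonal matrix whose rows are the `q_s`, `I + βL = Pᵀ diag(1 + βλ) P`, so
`N := (I + βL)⁻² = Pᵀ diag(ω) P` is symmetric with `N_ii = ∑_s ω_s q_s(i)²`, and `N 1_n = 1_n`
because `L 1_n = 0`. For such `N` the quadratic form at `1_n - e_i` is `n - 2 + N_ii`; since
`∑_s q_s(i)² = 1` and `ω_{n-1} = 1`, this is the stated right-hand side.
-/

open Matrix Finset

namespace Matrix

variable {n R K : Type*} [Fintype n] [DecidableEq n] [CommRing R] [Field K]

theorem eq_transpose_mul_diagonal_mul_of_mulVec_eq_smul {P L : Matrix n n R} {μ : n → R}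
    (hP : P * Pᵀ = 1) (hL : ∀ s, L *ᵥ P s = μ s • P s) :
    L = Pᵀ * diagonal μ * P := by
  have hLP : L * Pᵀ = Pᵀ * diagonal μ := by
    ext j s
    have hs := congrFun (hL s) j
    simp only [mulVec, dotProduct, Pi.smul_apply, smul_eq_mul] at hs
    rw [mul_diagonal, mul_apply]
    simp only [transpose_apply]
    rw [hs, mul_comm]
  calc L = L * (Pᵀ * P) := by rw [mul_eq_one_comm.mp hP, Matrix.mul_one]
    _ = Pᵀ * diagonal μ * P := by rw [← Matrix.mul_assoc, hLP]

theorem transpose_mul_diagonal_mul_apply (P : Matrix n n R) (f : n → R) (i j : n) :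
    (Pᵀ * diagonal f * P) i j = ∑ s, f s * P s i * P s j := by
  rw [mul_apply]
  simp only [mul_diagonal, transpose_apply]
  exact sum_congr rfl fun s _ => by ring

theorem isSymm_transpose_mul_diagonal_mul (P : Matrix n n R) (f : n → R) :
    (Pᵀ * diagonal f * P).IsSymm := by
  simp [IsSymm, Matrix.transpose_mul, Matrix.mul_assoc]

theorem one_add_smul_transpose_mul_diagonal_mul {P : Matrix n n R} (hP : P * Pᵀ = 1) (c : R)
    (f : n → R) : 1 + c • (Pᵀ * diagonal f * P) = Pᵀ * diagonal (fun s => 1 + c * f s) * P := by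
  have hdiag : diagonal (fun s => 1 + c * f s) = 1 + c • diagonal f := by
    ext j k
    by_cases hjk : j = k <;> simp [hjk]
  rw [hdiag, Matrix.mul_add, Matrix.add_mul, Matrix.mul_one, mul_eq_one_comm.mp hP,
    Matrix.mul_smul, Matrix.smul_mul]

theorem transpose_mul_diagonal_mul_mul {P : Matrix n n R} (hP : P * Pᵀ = 1) (f g : n → R) :
    Pᵀ * diagonal f * P * (Pᵀ * diagonal g * P) = Pᵀ * diagonal (f * g) * P := by
  calc _ = Pᵀ * diagonal f * (P * Pᵀ) * diagonal g * P := by simp only [Matrix.mul_assoc]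
    _ = _ := by rw [hP, Matrix.mul_one, Matrix.mul_assoc Pᵀ, diagonal_mul_diagonal]; rfl

theorem transpose_mul_diagonal_mul_mul_inv {P : Matrix n n K} (hP : P * Pᵀ = 1) {f : n → K}
    (hf : ∀ s, f s ≠ 0) : Pᵀ * diagonal f * P * (Pᵀ * diagonal f⁻¹ * P) = 1 := by
  rw [transpose_mul_diagonal_mul_mul hP,
    show f * f⁻¹ = fun _ => 1 from funext fun s => mul_inv_cancel₀ (hf s), diagonal_one,
    Matrix.mul_one, mul_eq_one_comm.mp hP]

theorem one_sub_single_dotProduct_mulVec {N : Matrix n n R} (hN : N.IsSymm) (h1 : N *ᵥ 1 = 1)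
    (i : n) :
    (1 - Pi.single i 1) ⬝ᵥ (N *ᵥ (1 - Pi.single i 1)) = Fintype.card n - 2 + N i i := by
  have hcol : 1 ⬝ᵥ (N *ᵥ Pi.single i 1) = 1 := by
    rw [dotProduct_mulVec, ← mulVec_transpose, hN.eq, h1, dotProduct_single_one, Pi.one_apply]
  rw [mulVec_sub, h1, dotProduct_sub, sub_dotProduct, sub_dotProduct, hcol, one_dotProduct_one,
    single_dotProduct, single_dotProduct, mulVec_single_one]
  simp only [Pi.one_apply, col_apply]
  ring

theorem mulVec_eq_self_of_mul_eq_one {A N : Matrix n n R} (hAN : A * N = 1) {v : n → R}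
    (hv : A *ᵥ v = v) : N *ᵥ v = v := by
  rw [← hv, mulVec_mulVec, mul_eq_one_comm.mp hAN, one_mulVec, hv]

section OrthonormalEigenbasis

variable {P L : Matrix n n K} {μ : n → K} {c : K}

theorem one_add_smul_eq_transpose_mul_diagonal_mul (hP : P * Pᵀ = 1)
    (hL : ∀ s, L *ᵥ P s = μ s • P s) :
    1 + c • L = Pᵀ * diagonal (fun s => 1 + c * μ s) * P := by
  rw [eq_transpose_mul_diagonal_mul_of_mulVec_eq_smul hP hL,
    one_add_smul_transpose_mul_diagonal_mul hP]

theorem isUnit_one_add_smul (hP : P * Pᵀ = 1) (hL : ∀ s, L *ᵥ P s = μ s • P s)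
    (hμ : ∀ s, 1 + c * μ s ≠ 0) : IsUnit (1 + c • L) := by
  rw [one_add_smul_eq_transpose_mul_diagonal_mul hP hL]
  exact IsUnit.of_mul_eq_one _ (transpose_mul_diagonal_mul_mul_inv hP hμ)

theorem one_sub_single_dotProduct_inv_sq_mulVec (hP : P * Pᵀ = 1)
    (hL : ∀ s, L *ᵥ P s = μ s • P s) (hμ : ∀ s, 1 + c * μ s ≠ 0) (hL1 : L *ᵥ 1 = 0) (i : n) :
    (1 - Pi.single i 1) ⬝ᵥ (((1 + c • L) ^ 2)⁻¹ *ᵥ (1 - Pi.single i 1))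
      = (Fintype.card n : K) - 1 - ∑ s, (1 - ((1 + c * μ s) ^ 2)⁻¹) * P s i ^ 2 := by
  have hMN : (1 + c • L) ^ 2 * (Pᵀ * diagonal ((fun s => 1 + c * μ s) ^ 2)⁻¹ * P) = 1 := by
    rw [sq, one_add_smul_eq_transpose_mul_diagonal_mul hP hL, transpose_mul_diagonal_mul_mul hP,
      ← sq, transpose_mul_diagonal_mul_mul_inv hP (f := (fun s => 1 + c * μ s) ^ 2)
      fun s => pow_ne_zero 2 (hμ s)]
  have hM1 : (1 + c • L) *ᵥ 1 = 1 := by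
    rw [add_mulVec, one_mulVec, smul_mulVec, hL1, smul_zero, add_zero]
  have hcol : ∑ s, P s i ^ 2 = 1 := by
    simpa [mul_apply, sq] using congrArg (· i i) (mul_eq_one_comm.mp hP)
  rw [inv_eq_right_inv hMN, one_sub_single_dotProduct_mulVec
    (isSymm_transpose_mul_diagonal_mul P _)
    (mulVec_eq_self_of_mul_eq_one hMN (by rw [sq, ← mulVec_mulVec, hM1, hM1])),
    transpose_mul_diagonal_mul_apply]
  simp only [Pi.inv_apply, Pi.pow_apply, mul_assoc, ← sq, sub_mul, one_mul, sum_sub_distrib, hcol]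
  ring

end OrthonormalEigenbasis

end Matrix

theorem social_loss_identity_general
    (n : ℕ) (hn : 0 < n)
    (L : Matrix (Fin n) (Fin n) ℝ)
    (q : ℕ → Fin n → ℝ) (lam : ℕ → ℝ)
    (heig : ∀ s, s < n → L *ᵥ q s = lam s • q s)
    (horth : ∀ s, s < n → ∀ t, t < n → ∑ i, q s i * q t i = if s = t then 1 else 0)
    (hdesc : ∀ s t, s ≤ t → t < n → lam t ≤ lam s)
    (hlam0 : lam (n - 1) = 0)
    (hqlast : ∀ i, q (n - 1) i = 1 / Real.sqrt n)
    (β : ℝ) (hβ : 0 ≤ β) (i : Fin n) :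
    IsUnit (1 + β • L)
    ∧ (fun j : Fin n => 1 - if j = i then (1 : ℝ) else 0) ⬝ᵥ
        (((1 + β • L) ^ 2)⁻¹ *ᵥ (fun j : Fin n => 1 - if j = i then (1 : ℝ) else 0))
      = ((n : ℝ) - 1) - ∑ j ∈ Finset.range (n - 1),
          (1 - 1 / (1 + β * lam j) ^ 2) * (q j i) ^ 2 := by
  obtain ⟨m, rfl⟩ : ∃ m, n = m + 1 := ⟨n - 1, (Nat.succ_pred_eq_of_pos hn).symm⟩
  rw [Nat.add_sub_cancel] at hlam0 hqlast ⊢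
  set P : Matrix (Fin (m + 1)) (Fin (m + 1)) ℝ := Matrix.of fun s j => q s j
  have hP : P * Pᵀ = 1 := by
    ext s t
    simp only [mul_apply, transpose_apply, P, of_apply, one_apply, horth s s.isLt t t.isLt,
      Fin.val_inj]
  have hμ : ∀ s : Fin (m + 1), 1 + β * lam s ≠ 0 := fun s => by
    have hlam := hlam0 ▸ hdesc s m (Nat.le_of_lt_succ s.isLt) (Nat.lt_succ_self m)
    exact (add_pos_of_pos_of_nonneg one_pos (mul_nonneg hβ hlam)).ne'
  have hL : ∀ s : Fin (m + 1), L *ᵥ P s = lam s • P s := fun s => heig s s.isLt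
  have hL1 : L *ᵥ 1 = 0 := by
    have h := heig m (Nat.lt_succ_self m)
    rw [hlam0, zero_smul, show q m = (1 / Real.sqrt (m + 1 : ℕ)) • 1 from funext fun j => by
      simp [hqlast], mulVec_smul, smul_eq_zero] at h
    exact h.resolve_left (by positivity)
  have hv : (fun j : Fin (m + 1) => 1 - if j = i then (1 : ℝ) else 0) = 1 - Pi.single i 1 := by
    funext j
    simp [Pi.single_apply]
  have hsum : ∑ j ∈ range m, (1 - 1 / (1 + β * lam j) ^ 2) * q j i ^ 2
      = ∑ s : Fin (m + 1), (1 - ((1 + β * lam s) ^ 2)⁻¹) * q s i ^ 2 := by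
    rw [Fin.sum_univ_eq_sum_range (fun j => (1 - ((1 + β * lam j) ^ 2)⁻¹) * q j i ^ 2),
      sum_range_succ, hlam0]
    simp
  refine ⟨isUnit_one_add_smul hP hL hμ, ?_⟩
  rw [hv, one_sub_single_dotProduct_inv_sq_mulVec hP hL hμ hL1, Fintype.card_fin, hsum]
  rfl

/-- Social loss identity for targeted intervention: for `β ≥ 0`
the matrix `I + βL` is invertible, and
`(1 − e_i)' (I + βL)^{−2} (1 − e_i) = (n−1) − ∑_{j=1}^{n−1} (1 − ω_j) q_j(i)²`,
where `ω_j = (1 + β λ_j)^{−2}` (0-based: `j ∈ range (n−1)`). -/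
theorem social_loss_identity
    (n : ℕ) (hn : 0 < n)
    (A : Matrix (Fin n) (Fin n) ℝ)
    (hA01 : ∀ i j, A i j = 0 ∨ A i j = 1)
    (hAsym : ∀ i j, A i j = A j i)
    (hAdiag : ∀ i, A i i = 0)
    (d : Fin n → ℝ) (hd : ∀ i, d i = ∑ j, A i j)
    (L : Matrix (Fin n) (Fin n) ℝ) (hLdef : L = Matrix.diagonal d - A)
    (q : ℕ → Fin n → ℝ) (lam : ℕ → ℝ)
    (heig : ∀ s, s < n → L *ᵥ q s = lam s • q s)
    (horth : ∀ s, s < n → ∀ t, t < n → ∑ i, q s i * q t i = if s = t then 1 else 0)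
    (hdesc : ∀ s t, s ≤ t → t < n → lam t ≤ lam s)
    (hlam0 : lam (n - 1) = 0)
    (hqlast : ∀ i, q (n - 1) i = 1 / Real.sqrt n)
    (β : ℝ) (hβ : 0 ≤ β) (i : Fin n) :
    IsUnit (1 + β • L)
    ∧ (fun j : Fin n => 1 - if j = i then (1 : ℝ) else 0) ⬝ᵥ
        (((1 + β • L) ^ 2)⁻¹ *ᵥ (fun j : Fin n => 1 - if j = i then (1 : ℝ) else 0))
      = ((n : ℝ) - 1) - ∑ j ∈ Finset.range (n - 1),
          (1 - 1 / (1 + β * lam j) ^ 2) * (q j i) ^ 2 :=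
  social_loss_identity_general n hn L q lam heig horth hdesc hlam0 hqlast β hβ i
end

section
/- (Key lemma for the symmetry property.) Let N(i) denote the set of neighbors of node i, and suppose nodes i and j satisfy N(i) \ {j} = N(j) \ {i} (so in particular d_i = d_j). Then for every eigenpair (λ, q) of L (i.e., L q = λ q with q ≠ 0) with λ ≠ d_i + A_{ij}, the entries of q at i and j coincide: q(i) = q(j). -/
open Matrix Finset

/-- Key lemma for the symmetry property: if nodes `i` and `j`
satisfy `N(i) \ {j} = N(j) \ {i}`, then every eigenpair `(λ, v)` of `L` with
`λ ≠ d_i + A_{ij}` has `v i = v j`. -/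
theorem symmetry_key_lemma
    (n : ℕ) (hn : 0 < n)
    (A : Matrix (Fin n) (Fin n) ℝ)
    (hA01 : ∀ i j, A i j = 0 ∨ A i j = 1)
    (hAsym : ∀ i j, A i j = A j i)
    (hAdiag : ∀ i, A i i = 0)
    (d : Fin n → ℝ) (hd : ∀ i, d i = ∑ j, A i j)
    (L : Matrix (Fin n) (Fin n) ℝ) (hLdef : L = Matrix.diagonal d - A)
    (i j : Fin n)
    (hN : ∀ k : Fin n, k ≠ i → k ≠ j → A i k = A j k)
    (lam : ℝ) (v : Fin n → ℝ) (hv : v ≠ 0)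
    (heig : L *ᵥ v = lam • v)
    (hne : lam ≠ d i + A i j) :
    v i = v j := by
  by_cases hij : i = j
  · rw [hij]
  -- difference of row sums against a weight function w
  have key : ∀ w : Fin n → ℝ,
      ∑ k, (A i k - A j k) * w k = A i j * w j - A i j * w i := by
    intro w
    have h1 : ∀ k, (A i k - A j k) * w k =
        (if k = i then -(A i j * w i) else 0) +
        (if k = j then A i j * w j else 0) := by
      intro k
      by_cases hki : k = i
      · subst hki
        simp [hAdiag, hij, hAsym k j]
      · by_cases hkj : k = j
        · subst hkj
          simp [hAdiag, hki]
        · rw [hN k hki hkj]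
          simp [hki, hkj]
    calc ∑ k, (A i k - A j k) * w k
        = ∑ k, ((if k = i then -(A i j * w i) else 0) +
            (if k = j then A i j * w j else 0)) := by
          exact Finset.sum_congr rfl fun k _ => h1 k
      _ = A i j * w j - A i j * w i := by
          rw [Finset.sum_add_distrib, Finset.sum_ite_eq' univ i,
            Finset.sum_ite_eq' univ j]
          simp; ring
  have hdij : d i = d j := by
    have := key (fun _ => 1)
    simpa [hd i, hd j, Finset.sum_sub_distrib, sub_eq_zero] using this
  have hsum : ∑ k, A i k * v k - ∑ k, A j k * v k = A i j * v j - A i j * v i := by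
    rw [← Finset.sum_sub_distrib]
    simpa [sub_mul] using key v
  have hLi : d i * v i - ∑ k, A i k * v k = lam * v i := by
    have h := congrFun heig i
    rw [hLdef, Matrix.sub_mulVec] at h
    simpa [Matrix.mulVec_diagonal, Matrix.mulVec, dotProduct, Matrix.diagonal_apply, ite_mul, zero_mul, Finset.sum_ite_eq] using h
  have hLj : d j * v j - ∑ k, A j k * v k = lam * v j := by
    have h := congrFun heig j
    rw [hLdef, Matrix.sub_mulVec] at h
    simpa [Matrix.mulVec_diagonal, Matrix.mulVec, dotProduct, Matrix.diagonal_apply, ite_mul, zero_mul, Finset.sum_ite_eq] using h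
  have hfinal : (d i + A i j - lam) * (v i - v j) = 0 := by
    linear_combination hLi - hLj + hsum - v j * hdij
  rcases mul_eq_zero.mp hfinal with h | h
  · exact absurd (by linarith : lam = d i + A i j) hne
  · linarith [sub_eq_zero.mp h]
end

section
/- (Key lemma for the periphery property.) Suppose node i has degree 1 and is connected only to node j (i.e., A_{ij} = 1 and d_i = 1). Let (λ, q) be an eigenpair of L, i.e., L q = λ q. If λ ≥ 2 then [q(j)]² ≥ [q(i)]², and if λ ≤ 2 then [q(i)]² ≥ [q(j)]². -/
open Matrix Finset

/-- Key lemma for the periphery property: if node `i` has degree 1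
and is connected to node `j`, and `(λ, v)` is an eigenpair of `L`, then `λ ≥ 2`
implies `v(j)² ≥ v(i)²` and `λ ≤ 2` implies `v(i)² ≥ v(j)²`. -/
theorem periphery_key_lemma
    (n : ℕ) (hn : 0 < n)
    (A : Matrix (Fin n) (Fin n) ℝ)
    (hA01 : ∀ i j, A i j = 0 ∨ A i j = 1)
    (hAsym : ∀ i j, A i j = A j i)
    (hAdiag : ∀ i, A i i = 0)
    (d : Fin n → ℝ) (hd : ∀ i, d i = ∑ j, A i j)
    (L : Matrix (Fin n) (Fin n) ℝ) (hLdef : L = Matrix.diagonal d - A)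
    (i j : Fin n) (hij : A i j = 1) (hdi : d i = 1)
    (lam : ℝ) (v : Fin n → ℝ) (hv : v ≠ 0)
    (heig : L *ᵥ v = lam • v) :
    (2 ≤ lam → (v i) ^ 2 ≤ (v j) ^ 2) ∧ (lam ≤ 2 → (v j) ^ 2 ≤ (v i) ^ 2) := by
  have hAnn : ∀ k l, 0 ≤ A k l := by
    intro k l; rcases hA01 k l with h | h <;> rw [h] <;> norm_num
  -- i's only neighbor is j
  have hA0 : ∀ k, k ≠ j → A i k = 0 := by
    intro k hk
    by_contra h
    have h1 : A i k = 1 := (hA01 i k).resolve_left h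
    have hsub : ({j, k} : Finset (Fin n)) ⊆ Finset.univ := Finset.subset_univ _
    have h2 : ∑ m ∈ ({j, k} : Finset (Fin n)), A i m ≤ ∑ m, A i m :=
      Finset.sum_le_sum_of_subset_of_nonneg hsub (fun m _ _ => hAnn i m)
    rw [Finset.sum_pair (Ne.symm hk)] at h2
    rw [hij, h1, ← hd, hdi] at h2
    linarith
  have hLv : ∀ k, (L *ᵥ v) k = d k * v k - ∑ l, A k l * v l := by
    intro k
    rw [hLdef, Matrix.sub_mulVec]
    simp only [Pi.sub_apply, Matrix.mulVec_diagonal]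
    simp only [Matrix.mulVec, dotProduct]
  have heig' : ∀ k, d k * v k - ∑ l, A k l * v l = lam * v k := by
    intro k
    rw [← hLv k, heig]; rfl
  -- row i
  have hrowi : v i - v j = lam * v i := by
    have := heig' i
    have hsumi : ∑ l, A i l * v l = v j := by
      rw [Finset.sum_eq_single j]
      · rw [hij, one_mul]
      · intro b _ hb; rw [hA0 b hb, zero_mul]
      · intro h; exact absurd (Finset.mem_univ j) h
    rw [hdi, hsumi, one_mul] at this
    exact this
  have hvj : v j = (1 - lam) * v i := by linarith
  -- PSD: lam ≥ 0
  have hquad : lam * (∑ k, v k ^ 2) =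
      (1/2) * ∑ k, ∑ l, A k l * (v k - v l) ^ 2 := by
    have e1 : ∑ k, ∑ l, A k l * (v k - v l) ^ 2 =
        (∑ k, ∑ l, A k l * v k ^ 2) + (∑ k, ∑ l, A k l * v l ^ 2)
          - 2 * ∑ k, ∑ l, A k l * (v k * v l) := by
      simp only [Finset.mul_sum]
      rw [← Finset.sum_add_distrib, ← Finset.sum_sub_distrib]
      apply Finset.sum_congr rfl
      intro k _
      rw [← Finset.sum_add_distrib, ← Finset.sum_sub_distrib]
      apply Finset.sum_congr rfl
      intro l _
      ring
    have e2 : ∑ k, ∑ l, A k l * v k ^ 2 = ∑ k, d k * v k ^ 2 := by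
      apply Finset.sum_congr rfl
      intro k _
      rw [← Finset.sum_mul, ← hd]
    have e3 : ∑ k, ∑ l, A k l * v l ^ 2 = ∑ k, d k * v k ^ 2 := by
      rw [Finset.sum_comm]
      apply Finset.sum_congr rfl
      intro l _
      rw [← Finset.sum_mul]
      congr 1
      rw [hd]
      exact Finset.sum_congr rfl fun k _ => hAsym k l
    have e4 : lam * (∑ k, v k ^ 2) =
        (∑ k, d k * v k ^ 2) - ∑ k, ∑ l, A k l * (v k * v l) := by
      rw [Finset.mul_sum, ← Finset.sum_sub_distrib]
      apply Finset.sum_congr rfl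
      intro k _
      have := heig' k
      have h5 : (∑ l, A k l * v l) * v k = ∑ l, A k l * (v k * v l) := by
        rw [Finset.sum_mul]
        exact Finset.sum_congr rfl fun l _ => by ring
      calc lam * v k ^ 2 = (lam * v k) * v k := by ring
        _ = (d k * v k - ∑ l, A k l * v l) * v k := by rw [this]
        _ = d k * v k ^ 2 - ∑ l, A k l * (v k * v l) := by
            rw [sub_mul, h5]
            congr 1
            ring
    rw [e1, e2, e3, e4]
    ring
  have hquadnn : 0 ≤ ∑ k, ∑ l, A k l * (v k - v l) ^ 2 := by
    apply Finset.sum_nonneg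
    intro k _
    apply Finset.sum_nonneg
    intro l _
    exact mul_nonneg (hAnn k l) (sq_nonneg _)
  have hSpos : 0 < ∑ k, v k ^ 2 := by
    obtain ⟨k, hk⟩ := Function.ne_iff.mp hv
    apply Finset.sum_pos' (fun m _ => sq_nonneg _)
    have hk' : v k ≠ 0 := hk
    exact ⟨k, Finset.mem_univ k, by positivity⟩
  have hlamnn : 0 ≤ lam := by nlinarith
  have hsq : v j ^ 2 = (1 - lam) ^ 2 * v i ^ 2 := by rw [hvj]; ring
  constructor
  · intro h2
    have h3 : 0 ≤ lam * (lam - 2) * v i ^ 2 :=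
      mul_nonneg (mul_nonneg (by linarith) (by linarith)) (sq_nonneg _)
    nlinarith [hsq, h3]
  · intro h2
    have h3 : 0 ≤ lam * (2 - lam) * v i ^ 2 :=
      mul_nonneg (mul_nonneg hlamnn (by linarith)) (sq_nonneg _)
    nlinarith [hsq, h3]
end

section
/- (The hub of a star attains the targeting upper bound.) Let n ≥ 2 and let G be the star graph on n vertices with hub h (the hub is adjacent to all other nodes, and each of the n−1 leaves is adjacent only to the hub). Fix β ≥ 0 and set ω_j = (1 + β λ_j)^{−2} and φ(i) = Σ_{j=1}^{n−1} (1 − ω_j) [q_j(i)]². Then: (a) the vector v = n·e_h − 1_n satisfies L v = n v, so λ_1 = n and the normalized eigenvector q_1 = v/‖v‖ satisfies [q_1(h)]² = 1 − 1/n; and (b) φ(h) = [1 − (1 + βn)^{−2}] · (1 − 1/n). -/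
/-!
Every eigenvector `w` of the star Laplacian orthogonal to `1` satisfies the hub equation
`n w(h) = λ w(h)`, so it either vanishes at the hub or has eigenvalue `n`. Hence every term of
`φ(h)` carries the factor `1 − (1 + βn)⁻²`, and the remaining weights `q_j(h)²`, `j < n − 1`, sum to
`1 − 1/n` because the columns of an orthogonal matrix are orthonormal too. An eigenvector for `n`
is determined by its hub value (each leaf carries `−w(h)/(n − 1)`), which gives `q_1(h)²`.
-/

open Matrix Finset

/-- `L` acts as the Laplacian of the star on `Fin n` with hub `h`. -/
structure IsStarLaplacian {n : ℕ} (L : Matrix (Fin n) (Fin n) ℝ) (h : Fin n) : Prop where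
  mulVec_hub : ∀ w, (L *ᵥ w) h = n * w h - ∑ j, w j
  mulVec_leaf : ∀ w i, i ≠ h → (L *ᵥ w) i = w i - w h

section Adjacency

variable {n : ℕ} {A : Matrix (Fin n) (Fin n) ℝ} {h : Fin n}

theorem star_adj_mulVec_hub (hdiag : A h h = 0) (hhub : ∀ j, j ≠ h → A h j = 1)
    (w : Fin n → ℝ) : (A *ᵥ w) h = ∑ j, w j - w h := by
  have hterm : ∀ j, A h j * w j = w j - if j = h then w j else 0 := by
    intro j
    by_cases hj : j = h
    · simp [hj, hdiag]
    · simp [hj, hhub j hj]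
  simp only [mulVec, dotProduct, hterm, sum_sub_distrib, sum_ite_eq', mem_univ, if_true]

theorem star_adj_mulVec_leaf (hsym : ∀ i j, A i j = A j i) (hhub : ∀ j, j ≠ h → A h j = 1)
    (hleaf : ∀ i j, i ≠ h → j ≠ h → A i j = 0) {i : Fin n} (hi : i ≠ h) (w : Fin n → ℝ) :
    (A *ᵥ w) i = w h := by
  have hterm : ∀ j, A i j * w j = if j = h then w j else 0 := by
    intro j
    by_cases hj : j = h
    · simp [hj, hsym i h, hhub i hi]
    · simp [hj, hleaf i j hi hj]
  simp only [mulVec, dotProduct, hterm, sum_ite_eq', mem_univ, if_true]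

theorem isStarLaplacian_laplacian (hsym : ∀ i j, A i j = A j i) (hdiag : ∀ i, A i i = 0)
    (hhub : ∀ j, j ≠ h → A h j = 1) (hleaf : ∀ i j, i ≠ h → j ≠ h → A i j = 0) :
    IsStarLaplacian (diagonal (A *ᵥ 1) - A) h := by
  have hL : ∀ w i, ((diagonal (A *ᵥ 1) - A) *ᵥ w) i = (A *ᵥ 1) i * w i - (A *ᵥ w) i := by
    intro w i
    simp [sub_mulVec, mulVec_diagonal]
  constructor
  · intro w
    rw [hL, star_adj_mulVec_hub (hdiag h) hhub, star_adj_mulVec_hub (hdiag h) hhub]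
    simp only [Pi.one_apply, sum_const, card_univ, Fintype.card_fin, nsmul_eq_mul, mul_one]
    ring
  · intro w i hi
    rw [hL, star_adj_mulVec_leaf hsym hhub hleaf hi, star_adj_mulVec_leaf hsym hhub hleaf hi]
    simp

end Adjacency

namespace IsStarLaplacian

variable {n : ℕ} {L : Matrix (Fin n) (Fin n) ℝ} {h : Fin n}

theorem mulVec_hubVector (hL : IsStarLaplacian L h) :
    L *ᵥ (fun j => (n : ℝ) * (if j = h then 1 else 0) - 1)
      = (n : ℝ) • (fun j => (n : ℝ) * (if j = h then 1 else 0) - 1) := by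
  have hsum : ∑ j : Fin n, ((n : ℝ) * (if j = h then 1 else 0) - 1) = 0 := by
    simp [sum_sub_distrib]
  funext i
  by_cases hi : i = h
  · subst hi
    rw [hL.mulVec_hub, hsum]
    simp
  · rw [hL.mulVec_leaf _ i hi]
    simp [hi]
    ring

theorem hub_eq_zero_or_eq_card {μ : ℝ} {w : Fin n → ℝ} (hL : IsStarLaplacian L h)
    (hw : L *ᵥ w = μ • w) (hsum : ∑ i, w i = 0) : w h = 0 ∨ μ = n := by
  have hhub := hL.mulVec_hub w
  rw [hw, hsum, Pi.smul_apply, smul_eq_mul, sub_zero] at hhub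
  rcases mul_eq_zero.mp (show (μ - n) * w h = 0 by linarith) with hμ | hwh
  · exact .inr (sub_eq_zero.mp hμ)
  · exact .inl hwh

theorem eq_one_of_hub_eq_zero {μ : ℝ} {w : Fin n → ℝ} (hL : IsStarLaplacian L h)
    (hw : L *ᵥ w = μ • w) (hwh : w h = 0) (hw0 : w ≠ 0) : μ = 1 := by
  obtain ⟨i, hi⟩ := Function.ne_iff.mp hw0
  have hih : i ≠ h := fun hih => hi (hih ▸ hwh)
  have hleaf := hL.mulVec_leaf w i hih
  rw [hw, hwh, Pi.smul_apply, smul_eq_mul, sub_zero] at hleaf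
  exact (mul_left_eq_self₀.mp hleaf).resolve_right hi

theorem sum_sq_of_mulVec_eq_card_smul {w : Fin n → ℝ} (hL : IsStarLaplacian L h)
    (hn : 2 ≤ n) (hw : L *ᵥ w = (n : ℝ) • w) :
    (n - 1) * ∑ i, w i ^ 2 = n * w h ^ 2 := by
  have hn1 : (n : ℝ) - 1 ≠ 0 := by
    have : (2 : ℝ) ≤ n := by exact_mod_cast hn
    linarith
  have hleaf : ∀ i ∈ ({h}ᶜ : Finset (Fin n)), w i ^ 2 = (w h / (n - 1)) ^ 2 := by
    intro i hi
    have := hL.mulVec_leaf w i (by simpa using hi)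
    rw [hw, Pi.smul_apply, smul_eq_mul] at this
    rw [show w i = -(w h / (n - 1)) by field_simp; linarith, neg_sq]
  rw [Fintype.sum_eq_add_sum_compl h, sum_congr rfl hleaf, sum_const, card_compl,
    card_singleton, Fintype.card_fin, nsmul_eq_mul, Nat.cast_sub (by omega), Nat.cast_one]
  field_simp
  ring

end IsStarLaplacian

section Orthonormal

variable {n : ℕ} {q : ℕ → Fin n → ℝ}
  (horth : ∀ s, s < n → ∀ t, t < n → ∑ i, q s i * q t i = if s = t then 1 else 0)
include horth

theorem sum_range_sq_eq_one_of_orthonormal (i : Fin n) : ∑ s ∈ range n, q s i ^ 2 = 1 := by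
  set Q : Matrix (Fin n) (Fin n) ℝ := of fun s i => q s i
  have hrows : Q * Qᵀ = 1 := by
    ext s t
    simp [Q, mul_apply, one_apply, horth s s.isLt t t.isLt, Fin.val_eq_val]
  have hcols : (Qᵀ * Q) i i = 1 := by rw [mul_eq_one_comm.mp hrows, one_apply_eq]
  simp only [mul_apply, transpose_apply, Q, of_apply] at hcols
  rw [← Fin.sum_univ_eq_sum_range (fun s => q s i ^ 2), ← hcols]
  simp [sq]

variable (hqlast : ∀ i, q (n - 1) i = 1 / Real.sqrt n)
include hqlast

theorem sum_eq_zero_of_orthonormal_of_last_const {s : ℕ} (hs : s < n - 1) :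
    ∑ i, q s i = 0 := by
  have hn : 0 < n := by omega
  have := horth s (by omega) (n - 1) (by omega)
  simp only [hqlast, ← sum_mul, if_neg (show s ≠ n - 1 by omega)] at this
  exact (mul_eq_zero.mp this).resolve_right (by positivity)

theorem sum_range_pred_sq_eq_of_orthonormal_of_last_const (hn : 0 < n) (i : Fin n) :
    ∑ s ∈ range (n - 1), q s i ^ 2 = 1 - 1 / n := by
  have hsplit := sum_range_succ (fun s => q s i ^ 2) (n - 1)
  rw [Nat.sub_add_cancel hn, sum_range_sq_eq_one_of_orthonormal horth i, hqlast,
    div_pow, Real.sq_sqrt (by positivity)] at hsplit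
  linarith

end Orthonormal

theorem star_hub_attains_bound_general
    (n : ℕ)
    (A : Matrix (Fin n) (Fin n) ℝ)
    (hAsym : ∀ i j, A i j = A j i)
    (hAdiag : ∀ i, A i i = 0)
    (d : Fin n → ℝ) (hd : ∀ i, d i = ∑ j, A i j)
    (L : Matrix (Fin n) (Fin n) ℝ) (hLdef : L = Matrix.diagonal d - A)
    (q : ℕ → Fin n → ℝ) (lam : ℕ → ℝ)
    (heig : ∀ s, s < n → L *ᵥ q s = lam s • q s)
    (horth : ∀ s, s < n → ∀ t, t < n → ∑ i, q s i * q t i = if s = t then 1 else 0)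
    (hdesc : ∀ s t, s ≤ t → t < n → lam t ≤ lam s)
    (hqlast : ∀ i, q (n - 1) i = 1 / Real.sqrt n)
    (hn2 : 2 ≤ n) (h : Fin n)
    (hstar1 : ∀ j : Fin n, j ≠ h → A h j = 1)
    (hstar0 : ∀ i j : Fin n, i ≠ h → j ≠ h → A i j = 0)
    (β : ℝ) :
    (L *ᵥ (fun j => (n : ℝ) * (if j = h then 1 else 0) - 1)
        = (n : ℝ) • (fun j => (n : ℝ) * (if j = h then 1 else 0) - 1))
    ∧ lam 0 = n
    ∧ (q 0 h) ^ 2 = 1 - 1 / n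
    ∧ ∑ j ∈ Finset.range (n - 1), (1 - 1 / (1 + β * lam j) ^ 2) * (q j h) ^ 2
        = (1 - 1 / (1 + β * n) ^ 2) * (1 - 1 / n) := by
  have hn : (2 : ℝ) ≤ n := by exact_mod_cast hn2
  have hL : IsStarLaplacian L h := by
    obtain rfl : d = A *ᵥ 1 := funext fun i => by simp [hd, mulVec, dotProduct]
    exact hLdef ▸ isStarLaplacian_laplacian hAsym hAdiag hstar1 hstar0
  have hhub : ∀ s, s < n - 1 → q s h = 0 ∨ lam s = n := fun s hs =>
    hL.hub_eq_zero_or_eq_card (heig s (by omega))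
      (sum_eq_zero_of_orthonormal_of_last_const horth hqlast hs)
  have hweights : ∑ s ∈ range (n - 1), q s h ^ 2 = 1 - 1 / n :=
    sum_range_pred_sq_eq_of_orthonormal_of_last_const horth hqlast (by omega) h
  -- Some `q s` with `s < n - 1` is nonzero at the hub, so `n ≤ λ₁`; and `q 0 h = 0` would force `λ₁ = 1`.
  have hlam0 : lam 0 = n := by
    have hpos : 0 < 1 - 1 / (n : ℝ) := by rw [sub_pos, div_lt_one (by linarith)]; linarith
    obtain ⟨s, hs, hqs⟩ := exists_ne_zero_of_sum_ne_zero (hweights ▸ hpos.ne')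
    have hlam_s : lam s = n := (hhub s (mem_range.mp hs)).resolve_left (by simpa using hqs)
    have hle : (n : ℝ) ≤ lam 0 := hlam_s ▸ hdesc 0 s s.zero_le (by simp at hs; omega)
    refine (hhub 0 (by omega)).resolve_left fun hq0h => ?_
    have hq0 : q 0 ≠ 0 := fun hq0 => by simpa [hq0] using horth 0 (by omega) 0 (by omega)
    have := hL.eq_one_of_hub_eq_zero (heig 0 (by omega)) hq0h hq0
    linarith
  refine ⟨hL.mulVec_hubVector, hlam0, ?_, ?_⟩
  · have hnorm := hL.sum_sq_of_mulVec_eq_card_smul hn2 (hlam0 ▸ heig 0 (by omega))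
    rw [show ∑ i, q 0 i ^ 2 = 1 by simpa [sq] using horth 0 (by omega) 0 (by omega)] at hnorm
    field_simp
    linarith
  · rw [← hweights, mul_sum]
    refine sum_congr rfl fun s hs => ?_
    rcases hhub s (mem_range.mp hs) with hq | hlam
    · simp [hq]
    · rw [hlam]

/-- The hub of a star attains the targeting upper bound: in the
star on `n ≥ 2` vertices with hub `h`, the vector `v = n e_h − 1` satisfies
`L v = n v`, so `λ_1 = n` (`lam 0 = n` in 0-based indexing) and `q_1(h)² = 1 − 1/n`;
moreover `φ(h) = (1 − (1 + βn)^{−2})(1 − 1/n)`. -/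
theorem star_hub_attains_bound
    (n : ℕ) (hn : 0 < n)
    (A : Matrix (Fin n) (Fin n) ℝ)
    (hA01 : ∀ i j, A i j = 0 ∨ A i j = 1)
    (hAsym : ∀ i j, A i j = A j i)
    (hAdiag : ∀ i, A i i = 0)
    (d : Fin n → ℝ) (hd : ∀ i, d i = ∑ j, A i j)
    (L : Matrix (Fin n) (Fin n) ℝ) (hLdef : L = Matrix.diagonal d - A)
    (q : ℕ → Fin n → ℝ) (lam : ℕ → ℝ)
    (heig : ∀ s, s < n → L *ᵥ q s = lam s • q s)
    (horth : ∀ s, s < n → ∀ t, t < n → ∑ i, q s i * q t i = if s = t then 1 else 0)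
    (hdesc : ∀ s t, s ≤ t → t < n → lam t ≤ lam s)
    (hlam0 : lam (n - 1) = 0)
    (hqlast : ∀ i, q (n - 1) i = 1 / Real.sqrt n)
    (hn2 : 2 ≤ n) (h : Fin n)
    (hstar1 : ∀ j : Fin n, j ≠ h → A h j = 1)
    (hstar0 : ∀ i j : Fin n, i ≠ h → j ≠ h → A i j = 0)
    (β : ℝ) (hβ : 0 ≤ β) :
    (L *ᵥ (fun j => (n : ℝ) * (if j = h then 1 else 0) - 1)
        = (n : ℝ) • (fun j => (n : ℝ) * (if j = h then 1 else 0) - 1))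
    ∧ lam 0 = n
    ∧ (q 0 h) ^ 2 = 1 - 1 / n
    ∧ ∑ j ∈ Finset.range (n - 1), (1 - 1 / (1 + β * lam j) ^ 2) * (q j h) ^ 2
        = (1 - 1 / (1 + β * n) ^ 2) * (1 - 1 / n) :=
  star_hub_attains_bound_general n A hAsym hAdiag d hd L hLdef q lam heig horth hdesc hqlast hn2 h
    hstar1 hstar0 β
end
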